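/- arXiv:2304.09501 — 4 statements merged into one kernel-verified Lean document; each statement's English description precedes it below -/
import Mathlib

section
/- Let V be a finite-dimensional real normed vector space and B : V → V → ℝ a symmetric bilinear form. Let η_j, ξ_j : Fin 3 → V (j ∈ ℕ) be sequences of triples such that for every j: (i) B(η_{j,α}, η_{j,β}) = δ_{αβ} for all α, β; (ii) the linear span of {η_{j,1}, η_{j,2}, η_{j,3}} equals the linear span of {ξ_{j,1}, ξ_{j,2}, ξ_{j,3}}. Suppose that ξ_j converges componentwise to a triple ξ_∞ : Fin 3 → V which is linearly independent, and that B is positive definite on the span of {ξ_{∞,1}, ξ_{∞,2}, ξ_{∞,3}}. Then there exists M such that ‖η_{j,α}‖ ≤ M for all j and all α. -/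
open Filter Topology Metric

/-! Write `η_{j,α} = ∑_β c_β ξ_{j,β}`. The quadratic form `c ↦ B(∑ c_β ξ_β, ∑ c_β ξ_β)` is
positive on the unit sphere for `ξ = ξ_∞`, hence, by compactness of the sphere, bounded below by
some `m > 0` there for all frames `ξ` near `ξ_∞`. For large `j` the normalization
`B(η_{j,α}, η_{j,α}) = 1` then forces `‖c‖ ≤ √(1/m)`, and `‖η_{j,α}‖ ≤ ‖c‖ ∑_β ‖ξ_{j,β}‖`;
the finitely many remaining `j` are bounded trivially. -/

theorem QuadraticMap.mul_sq_norm_le_of_forall_sphere {E : Type*} [NormedAddCommGroup E]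
    [NormedSpace ℝ E] (Q : QuadraticForm ℝ E) {m : ℝ} (hm : ∀ u ∈ sphere (0 : E) 1, m ≤ Q u)
    (x : E) : m * ‖x‖ ^ 2 ≤ Q x := by
  rcases eq_or_ne x 0 with rfl | hx
  · simp
  have hx' : ‖x‖ ≠ 0 := norm_ne_zero_iff.2 hx
  have hu : ‖x‖⁻¹ • x ∈ sphere (0 : E) 1 := by simp [norm_smul, hx']
  calc m * ‖x‖ ^ 2 ≤ Q (‖x‖⁻¹ • x) * ‖x‖ ^ 2 := by gcongr; exact hm _ hu
    _ = Q x := by rw [Q.map_smul, smul_eq_mul]; field_simp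

theorem norm_sum_smul_le {ι V : Type*} [Fintype ι] [SeminormedAddCommGroup V] [NormedSpace ℝ V]
    (c : ι → ℝ) (x : ι → V) : ‖∑ i, c i • x i‖ ≤ ‖c‖ * ∑ i, ‖x i‖ :=
  calc ‖∑ i, c i • x i‖ ≤ ∑ i, ‖c i‖ * ‖x i‖ := by
        simpa only [norm_smul] using norm_sum_le Finset.univ fun i => c i • x i
    _ ≤ ∑ i, ‖c‖ * ‖x i‖ := by gcongr with i; exact norm_le_pi_norm c i
    _ = ‖c‖ * ∑ i, ‖x i‖ := (Finset.mul_sum ..).symm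

theorem exists_forall_le_of_eventually_forall_le {ι : Type*} [Finite ι] {f : ℕ → ι → ℝ} {K : ℝ}
    (h : ∀ᶠ j in atTop, ∀ i, f j i ≤ K) : ∃ M, ∀ j i, f j i ≤ M := by
  obtain ⟨N, hN⟩ := h.exists_forall_of_atTop
  obtain ⟨M, hM⟩ :=
    (((Set.finite_Iio N).prod Set.finite_univ).image fun p : ℕ × ι => f p.1 p.2).bddAbove
  refine ⟨max K M, fun j i => ?_⟩
  rcases lt_or_ge j N with hj | hj
  · exact (hM ⟨(j, i), ⟨hj, trivial⟩, rfl⟩).trans (le_max_right _ _)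
  · exact (hN j hj i).trans (le_max_left _ _)

theorem exists_pos_eventually_forall_sphere_le {V ι : Type*} [NormedAddCommGroup V]
    [NormedSpace ℝ V] [FiniteDimensional ℝ V] [Fintype ι] (B : V →ₗ[ℝ] V →ₗ[ℝ] ℝ) {x₀ : ι → V}
    (hli : LinearIndependent ℝ x₀)
    (hpos : ∀ v ∈ Submodule.span ℝ (Set.range x₀), v ≠ 0 → 0 < B v v) :
    ∃ m > 0, ∀ᶠ x in 𝓝 x₀, ∀ c ∈ sphere (0 : ι → ℝ) 1,
      m ≤ B (∑ i, c i • x i) (∑ i, c i • x i) := by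
  set Φ : (ι → V) × (ι → ℝ) → ℝ := fun p => B (∑ i, p.2 i • p.1 i) (∑ i, p.2 i • p.1 i)
  have hΦ : Continuous Φ := by
    have h : Continuous fun p : (ι → V) × (ι → ℝ) => ∑ i, p.2 i • p.1 i := by fun_prop
    exact B.toContinuousBilinearMap.continuous₂.comp (h.prodMk h)
  have hΦ₀ : ∀ c ∈ sphere (0 : ι → ℝ) 1, 0 < Φ (x₀, c) := by
    intro c hc
    refine hpos _ (Submodule.sum_mem _ fun i _ =>
      Submodule.smul_mem _ _ (Submodule.subset_span ⟨i, rfl⟩)) fun h0 => ?_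
    have : c = 0 := funext (Fintype.linearIndependent_iff.1 hli c h0)
    simp [this] at hc
  obtain ⟨m, hm, hmΦ⟩ := (isCompact_sphere (0 : ι → ℝ) 1).exists_forall_le'
    (hΦ.comp (Continuous.prodMk_right x₀)).continuousOn hΦ₀
  refine ⟨m / 2, half_pos hm,
    (isCompact_sphere _ _).eventually_forall_of_forall_eventually fun c hc => ?_⟩
  exact (hΦ.continuousAt.eventually (lt_mem_nhds ((half_lt_self hm).trans_le (hmΦ c hc)))).mono
    fun _ => le_of_lt

theorem stmt2_general (V : Type*) [NormedAddCommGroup V] [NormedSpace ℝ V] [FiniteDimensional ℝ V]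
    (B : V →ₗ[ℝ] V →ₗ[ℝ] ℝ)
    (η ξ : ℕ → Fin 3 → V) (ξ' : Fin 3 → V)
    (horth : ∀ j α β, B (η j α) (η j β) = if α = β then (1 : ℝ) else 0)
    (hspan : ∀ j, Submodule.span ℝ (Set.range (η j)) = Submodule.span ℝ (Set.range (ξ j)))
    (hconv : ∀ α, Tendsto (fun j => ξ j α) atTop (nhds (ξ' α)))
    (hli : LinearIndependent ℝ ξ')
    (hpos : ∀ v ∈ Submodule.span ℝ (Set.range ξ'), v ≠ 0 → 0 < B v v) :
    ∃ M : ℝ, ∀ j α, ‖η j α‖ ≤ M := by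
  obtain ⟨m, hm, hnear⟩ := exists_pos_eventually_forall_sphere_le B hli hpos
  have hξ : Tendsto ξ atTop (𝓝 ξ') := tendsto_pi_nhds.2 hconv
  have hsum : ∀ᶠ j in atTop, ∑ β, ‖ξ j β‖ < ∑ β, ‖ξ' β‖ + 1 :=
    ((by fun_prop : Continuous fun x : Fin 3 → V => ∑ β, ‖x β‖).tendsto ξ' |>.comp hξ).eventually
      (eventually_lt_nhds (lt_add_one _))
  apply exists_forall_le_of_eventually_forall_le (K := √(1 / m) * (∑ β, ‖ξ' β‖ + 1))
  filter_upwards [hξ.eventually hnear, hsum] with j hj hjsum α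
  obtain ⟨c, hc⟩ := (Submodule.mem_span_range_iff_exists_fun ℝ).1
    (hspan j ▸ Submodule.subset_span ⟨α, rfl⟩ : η j α ∈ Submodule.span ℝ (Set.range (ξ j)))
  have hcm : m * ‖c‖ ^ 2 ≤ 1 := by
    have hQ := ((LinearMap.BilinMap.toQuadraticMap B).comp
      (Fintype.linearCombination ℝ (ξ j))).mul_sq_norm_le_of_forall_sphere hj c
    simpa [Fintype.linearCombination_apply, hc, horth] using hQ
  have hc_le : ‖c‖ ≤ √(1 / m) := by
    have hc2 : ‖c‖ ^ 2 ≤ 1 / m := by rw [le_div_iff₀ hm]; linarith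
    simpa only [abs_norm] using Real.abs_le_sqrt hc2
  calc ‖η j α‖ = ‖∑ β, c β • ξ j β‖ := by rw [hc]
    _ ≤ ‖c‖ * ∑ β, ‖ξ j β‖ := norm_sum_smul_le c (ξ j)
    _ ≤ √(1 / m) * (∑ β, ‖ξ' β‖ + 1) := by gcongr

/-- If `η_j` are `B`-orthonormal triples whose spans agree with those of triples `ξ_j`
converging to a linearly independent triple `ξ_∞` spanning a `B`-positive definite subspace,
then the `η_j` are uniformly bounded in norm. -/
theorem stmt2 (V : Type*) [NormedAddCommGroup V] [NormedSpace ℝ V] [FiniteDimensional ℝ V]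
    (B : V →ₗ[ℝ] V →ₗ[ℝ] ℝ) (hsymm : ∀ x y, B x y = B y x)
    (η ξ : ℕ → Fin 3 → V) (ξ' : Fin 3 → V)
    (horth : ∀ j α β, B (η j α) (η j β) = if α = β then (1 : ℝ) else 0)
    (hspan : ∀ j, Submodule.span ℝ (Set.range (η j)) = Submodule.span ℝ (Set.range (ξ j)))
    (hconv : ∀ α, Tendsto (fun j => ξ j α) atTop (nhds (ξ' α)))
    (hli : LinearIndependent ℝ ξ')
    (hpos : ∀ v ∈ Submodule.span ℝ (Set.range ξ'), v ≠ 0 → 0 < B v v) :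
    ∃ M : ℝ, ∀ j α, ‖η j α‖ ≤ M :=
  stmt2_general V B η ξ ξ' horth hspan hconv hli hpos
end

section
/- Let V be a finite-dimensional real normed vector space and B : V → V → ℝ a symmetric bilinear form. Let η_j : Fin 3 → V be a sequence of triples with B(η_{j,α}, η_{j,β}) = δ_{αβ} for all j, α, β, and suppose max_α ‖η_{j,α}‖ → ∞ as j → ∞. Then there exists a sequence of vectors u_j ∈ V with ‖u_j‖ = 1, each u_j lying in the linear span of {η_{j,1}, η_{j,2}, η_{j,3}}, such that B(u_j, u_j) → 0 as j → ∞. -/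
/-!
Each `η j α` has `B`-square `1`, so normalizing the longest vector of the triple gives a unit
vector in its span whose `B`-square is `‖η j α‖⁻²`, and this tends to `0` with the maximal norm.
-/

open Filter Topology

section NormalizeBilin

variable {V : Type*} [NormedAddCommGroup V] [NormedSpace ℝ V] (B : V →ₗ[ℝ] V →ₗ[ℝ] ℝ)

theorem LinearMap.bilin_smul_smul_self (c : ℝ) (v : V) : B (c • v) (c • v) = c ^ 2 * B v v := by
  simp only [map_smul, LinearMap.smul_apply, smul_eq_mul]
  ring

theorem tendsto_bilin_inv_norm_smul_self_of_tendsto_norm {ι : Type*} {l : Filter ι} {v : ι → V}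
    (hv : ∀ i, B (v i) (v i) = 1) (hnorm : Tendsto (fun i => ‖v i‖) l atTop) :
    Tendsto (fun i => B (‖v i‖⁻¹ • v i) (‖v i‖⁻¹ • v i)) l (𝓝 0) := by
  simp only [B.bilin_smul_smul_self, hv, mul_one]
  simpa using (tendsto_inv_atTop_zero.comp hnorm).pow 2

end NormalizeBilin

theorem stmt3_general (V : Type*) [NormedAddCommGroup V] [NormedSpace ℝ V]
    (B : V →ₗ[ℝ] V →ₗ[ℝ] ℝ)
    (η : ℕ → Fin 3 → V)
    (horth : ∀ j α β, B (η j α) (η j β) = if α = β then (1 : ℝ) else 0)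
    (hdiv : Tendsto (fun j => ⨆ α : Fin 3, ‖η j α‖) atTop atTop) :
    ∃ u : ℕ → V, (∀ j, ‖u j‖ = 1 ∧ u j ∈ Submodule.span ℝ (Set.range (η j))) ∧
      Tendsto (fun j => B (u j) (u j)) atTop (nhds 0) := by
  choose α hα using fun j => exists_eq_ciSup_of_finite (f := fun a : Fin 3 => ‖η j a‖)
  have hself : ∀ j, B (η j (α j)) (η j (α j)) = 1 := fun j => by simp [horth]
  have hne : ∀ j, η j (α j) ≠ 0 := fun j h => by simpa [h] using hself j
  refine ⟨fun j => ‖η j (α j)‖⁻¹ • η j (α j), fun j => ⟨?_, ?_⟩, ?_⟩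
  · exact norm_smul_inv_norm (𝕜 := ℝ) (hne j)
  · exact Submodule.smul_mem _ _ (Submodule.subset_span ⟨α j, rfl⟩)
  · refine tendsto_bilin_inv_norm_smul_self_of_tendsto_norm B hself ?_
    simpa only [hα] using hdiv

/-- If `η_j` are `B`-orthonormal triples with `max_α ‖η_{j,α}‖ → ∞`, then there are unit
vectors `u_j` in the span of `η_j` with `B(u_j, u_j) → 0`. -/
theorem stmt3 (V : Type*) [NormedAddCommGroup V] [NormedSpace ℝ V] [FiniteDimensional ℝ V]
    (B : V →ₗ[ℝ] V →ₗ[ℝ] ℝ) (hsymm : ∀ x y, B x y = B y x)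
    (η : ℕ → Fin 3 → V)
    (horth : ∀ j α β, B (η j α) (η j β) = if α = β then (1 : ℝ) else 0)
    (hdiv : Tendsto (fun j => ⨆ α : Fin 3, ‖η j α‖) atTop atTop) :
    ∃ u : ℕ → V, (∀ j, ‖u j‖ = 1 ∧ u j ∈ Submodule.span ℝ (Set.range (η j))) ∧
      Tendsto (fun j => B (u j) (u j)) atTop (nhds 0) :=
  stmt3_general V B η horth hdiv
end

section
/- Let V be a finite-dimensional real normed vector space and B : V → V → ℝ a symmetric bilinear form. Assume V admits a direct sum decomposition V = P⁺ ⊕ P⁻ into B-orthogonal subspaces with dim P⁺ = 3, B positive definite on P⁺ and negative definite on P⁻. Let Λ ⊆ V be the ℤ-span of some ℝ-basis of V. Let η_∞ : Fin 3 → V be a triple with B(η_{∞,α}, η_{∞,β}) = δ_{αβ}, and let P be the span of {η_{∞,1}, η_{∞,2}, η_{∞,3}}; assume there is no δ ∈ Λ with B(δ,δ) = -2 and B(δ,x) = 0 for all x ∈ P. Suppose η_j : Fin 3 → V converges componentwise to η_∞, and C_j ∈ Λ is a sequence with C_j ≠ 0, B(C_j, C_j) ∈ {0, -2}, and B(C_j,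 η_{j,α}) → 0 as j → ∞ for each α. Then a contradiction follows (i.e., no such data can exist). -/
/-!
A nonzero vector orthogonal to a positive definite `3`-plane `P` of a form of signature `(3, n)`
has negative square. Now pass to the limit in the classes `C j`: if their norms are bounded, the
lattice contains only finitely many of them, so some class `v` occurs infinitely often and its
pairings with `η_∞` vanish, i.e. `v ⊥ P`; since `B v v ∈ {0, -2}`, `v` is either an isotropic
vector or a `(-2)`-class orthogonal to `P`. If the norms are unbounded, a limit `u` of
`C j / ‖C j‖` is a unit vector orthogonal to `P` with `B u u = lim B (C j) (C j) / ‖C j‖² = 0`.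
-/

open Filter Topology Module Submodule

namespace LinearMap

section Algebraic

variable {V : Type*} [AddCommGroup V] [Module ℝ V] (B : V →ₗ[ℝ] V →ₗ[ℝ] ℝ)

def IsOrthonormal {ι : Type*} [DecidableEq ι] (v : ι → V) : Prop :=
  ∀ i j, B (v i) (v j) = if i = j then 1 else 0

namespace IsOrthonormal

variable {B} {ι : Type*} [Fintype ι] [DecidableEq ι] {v : ι → V}

theorem apply_sum_smul (hv : B.IsOrthonormal v) (c : ι → ℝ) (j : ι) :
    B (∑ i, c i • v i) (v j) = c j := by
  simp [map_sum, hv _ j]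

theorem apply_sum_smul_self (hv : B.IsOrthonormal v) (c : ι → ℝ) :
    B (∑ i, c i • v i) (∑ i, c i • v i) = ∑ i, c i ^ 2 := by
  simp_rw [map_sum (B (∑ i, c i • v i)), map_smul, hv.apply_sum_smul, smul_eq_mul, sq]

theorem linearIndependent (hv : B.IsOrthonormal v) : LinearIndependent ℝ v :=
  Fintype.linearIndependent_iff.2 fun c hc j => by simpa [hc] using (hv.apply_sum_smul c j).symm

end IsOrthonormal

theorem finrank_le_of_nonneg_of_isCompl [FiniteDimensional ℝ V] {Pp Pm W : Submodule ℝ V}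
    (hcompl : IsCompl Pp Pm) (hneg : ∀ y ∈ Pm, y ≠ 0 → B y y < 0) (hW : ∀ x ∈ W, 0 ≤ B x x) :
    finrank ℝ W ≤ finrank ℝ Pp := by
  have hdisj : Disjoint W Pm := disjoint_def.2 fun x hxW hxPm => by
    by_contra hx
    exact (hW x hxW).not_gt (hneg x hxPm hx)
  have := Submodule.finrank_add_finrank_le_of_disjoint hdisj
  have := Submodule.finrank_add_eq_of_isCompl hcompl
  omega

/-- `w` together with `v` would span an `(n + 1)`-dimensional subspace on which `B` is
positive semidefinite, which is too big to meet the negative definite `Pm` trivially. -/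
theorem eq_zero_of_orthogonal_of_nonneg [FiniteDimensional ℝ V] (hB : ∀ x y, B x y = B y x)
    {Pp Pm : Submodule ℝ V} (hcompl : IsCompl Pp Pm) (hneg : ∀ y ∈ Pm, y ≠ 0 → B y y < 0)
    {n : ℕ} (hn : finrank ℝ Pp ≤ n) {v : Fin n → V} (hv : B.IsOrthonormal v)
    {w : V} (hwv : ∀ i, B w (v i) = 0) (hw : 0 ≤ B w w) : w = 0 := by
  by_contra hw0
  have hw_notMem : w ∉ span ℝ (Set.range v) := by
    intro hmem
    obtain ⟨c, rfl⟩ := (mem_span_range_iff_exists_fun ℝ).1 hmem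
    have hc : c = 0 := funext fun j => (hv.apply_sum_smul c j).symm.trans (hwv j)
    simp [hc] at hw0
  have hli : LinearIndependent ℝ (Fin.cons w v : Fin (n + 1) → V) :=
    linearIndependent_finCons.2 ⟨hv.linearIndependent, hw_notMem⟩
  have hnonneg : ∀ x ∈ span ℝ (Set.range (Fin.cons w v : Fin (n + 1) → V)), 0 ≤ B x x := by
    intro x hx
    obtain ⟨c, rfl⟩ := (mem_span_range_iff_exists_fun ℝ).1 hx
    simp only [Fin.sum_univ_succ, Fin.cons_zero, Fin.cons_succ]
    set p := ∑ i, c i.succ • v i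
    have hwp : B w p = 0 := by simp [p, map_sum, hwv]
    have hpw : B p w = 0 := by rw [hB, hwp]
    have hpp : 0 ≤ B p p := by
      rw [hv.apply_sum_smul_self]
      positivity
    simp only [map_add, map_smul, add_apply, smul_apply, smul_eq_mul, hwp, hpw]
    nlinarith [mul_nonneg (sq_nonneg (c 0)) hw]
  have := B.finrank_le_of_nonneg_of_isCompl hcompl hneg hnonneg
  rw [finrank_span_eq_card hli, Fintype.card_fin] at this
  omega

end Algebraic

section Analytic

variable {V : Type*} [NormedAddCommGroup V] [NormedSpace ℝ V] [FiniteDimensional ℝ V]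
  (B : V →ₗ[ℝ] V →ₗ[ℝ] ℝ)

theorem apply_eq_zero_of_tendsto {ι : Type*} {l : Filter ι} [l.NeBot] {x y : ι → V} {u v : V}
    (hx : Tendsto x l (𝓝 u)) (hy : Tendsto y l (𝓝 v))
    (h : Tendsto (fun i => B (x i) (y i)) l (𝓝 0)) : B u v = 0 :=
  tendsto_nhds_unique ((B.toContinuousBilinearMap.continuous₂.tendsto (u, v)).comp
    (hx.prodMk_nhds hy)) h

theorem apply_eq_zero_of_frequently_eq {ι : Type*} {η : ℕ → ι → V} {η' : ι → V}
    (hconv : ∀ α, Tendsto (fun j => η j α) atTop (𝓝 (η' α))) {C : ℕ → V}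
    (hper : ∀ α, Tendsto (fun j => B (C j) (η j α)) atTop (𝓝 0)) {v : V}
    (hv : ∃ᶠ j in atTop, C j = v) (α : ι) : B v (η' α) = 0 := by
  have : (atTop ⊓ 𝓟 {j | C j = v}).NeBot := frequently_iff_neBot.1 hv
  have hCv : Tendsto C (atTop ⊓ 𝓟 {j | C j = v}) (𝓝 v) :=
    tendsto_const_nhds.congr' (eventually_inf_principal.2 (.of_forall fun _ hj => hj.symm))
  exact B.apply_eq_zero_of_tendsto hCv ((hconv α).mono_left inf_le_left)
    ((hper α).mono_left inf_le_left)

theorem exists_isotropic_orthogonal_of_tendsto_norm_atTop {ι : Type*} {η : ℕ → ι → V}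
    {η' : ι → V} (hconv : ∀ α, Tendsto (fun j => η j α) atTop (𝓝 (η' α))) {C : ℕ → V}
    (hC : Tendsto (fun j => ‖C j‖) atTop atTop) {K : ℝ} (hK : ∀ j, |B (C j) (C j)| ≤ K)
    (hper : ∀ α, Tendsto (fun j => B (C j) (η j α)) atTop (𝓝 0)) :
    ∃ u ≠ 0, B u u = 0 ∧ ∀ α, B u (η' α) = 0 := by
  set x : ℕ → V := fun j => ‖C j‖⁻¹ • C j
  have hinv : Tendsto (fun j => ‖C j‖⁻¹) atTop (𝓝 0) := tendsto_inv_atTop_zero.comp hC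
  have hsphere : ∀ᶠ j in atTop, x j ∈ Metric.sphere (0 : V) 1 :=
    (hC.eventually_gt_atTop 0).mono fun j hj => by simp [x, norm_smul, hj.ne']
  have hxη : ∀ α, Tendsto (fun j => B (x j) (η j α)) atTop (𝓝 0) := fun α => by
    simpa [x] using hinv.mul (hper α)
  have hxx : Tendsto (fun j => B (x j) (x j)) atTop (𝓝 0) := by
    refine squeeze_zero_norm (fun j => ?_) (by simpa using (hinv.pow 2).mul_const K)
    simp only [x, map_smul, smul_apply, smul_eq_mul, Real.norm_eq_abs, abs_mul, abs_inv,
      abs_norm]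
    calc ‖C j‖⁻¹ * (‖C j‖⁻¹ * |B (C j) (C j)|) = (‖C j‖ ^ 2)⁻¹ * |B (C j) (C j)| := by ring
      _ ≤ (‖C j‖ ^ 2)⁻¹ * K := by gcongr; exact hK j
  obtain ⟨u, hu, φ, hφ, hxu⟩ := (isCompact_sphere (0 : V) 1).tendsto_subseq' hsphere.frequently
  refine ⟨u, ne_zero_of_mem_unit_sphere ⟨u, hu⟩, ?_, fun α => ?_⟩
  · exact B.apply_eq_zero_of_tendsto hxu hxu (hxx.comp hφ.tendsto_atTop)
  · exact B.apply_eq_zero_of_tendsto hxu ((hconv α).comp hφ.tendsto_atTop)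
      ((hxη α).comp hφ.tendsto_atTop)

end Analytic

end LinearMap

theorem exists_frequently_eq_of_frequently_norm_le {V ι : Type*} [NormedAddCommGroup V]
    [NormedSpace ℝ V] [FiniteDimensional ℝ V] [Finite ι] (b : Basis ι ℝ V) {α : Type*}
    {l : Filter α} {C : α → V} (hC : ∀ j, C j ∈ span ℤ (Set.range b)) {R : ℝ}
    (hR : ∃ᶠ j in l, ‖C j‖ ≤ R) : ∃ v, ∃ᶠ j in l, C j = v := by
  have hfin := ZSpan.setFinite_inter b (Metric.isBounded_closedBall (x := 0) (r := R))
  obtain ⟨v, -, hv⟩ := (frequently_exists_finite (p := fun v j => C j = v) hfin).1 <|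
    hR.mono fun j hj => ⟨C j, ⟨by simpa using hj, hC j⟩, rfl⟩
  exact ⟨v, hv⟩

theorem stmt4_general (V : Type*) [NormedAddCommGroup V] [NormedSpace ℝ V] [FiniteDimensional ℝ V]
    (B : V →ₗ[ℝ] V →ₗ[ℝ] ℝ) (hsymm : ∀ x y, B x y = B y x)
    (Pp Pm : Submodule ℝ V) (hcompl : IsCompl Pp Pm)
    (hdimPp : Module.finrank ℝ Pp = 3)
    (hneg : ∀ y ∈ Pm, y ≠ 0 → B y y < 0)
    (b : Module.Basis (Fin (Module.finrank ℝ V)) ℝ V)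
    (Λ : Set V) (hΛ : Λ = (Submodule.span ℤ (Set.range b) : Set V))
    (η' : Fin 3 → V)
    (horthη : ∀ α β, B (η' α) (η' β) = if α = β then (1 : ℝ) else 0)
    (hnodelta : ¬ ∃ δ ∈ Λ, B δ δ = -2 ∧
      ∀ x ∈ Submodule.span ℝ (Set.range η'), B δ x = 0)
    (η : ℕ → Fin 3 → V)
    (hconv : ∀ α, Tendsto (fun j => η j α) atTop (nhds (η' α)))
    (C : ℕ → V) (hCmem : ∀ j, C j ∈ Λ) (hCne : ∀ j, C j ≠ 0)
    (hCsq : ∀ j, B (C j) (C j) = 0 ∨ B (C j) (C j) = -2)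
    (hCper : ∀ α, Tendsto (fun j => B (C j) (η j α)) atTop (nhds 0)) :
    False := by
  have horth_nonneg : ∀ w, (∀ α, B w (η' α) = 0) → 0 ≤ B w w → w = 0 := fun _ hw hww =>
    B.eq_zero_of_orthogonal_of_nonneg hsymm hcompl hneg hdimPp.le horthη hw hww
  by_cases hC : Tendsto (fun j => ‖C j‖) atTop atTop
  · have hCsq_le : ∀ j, |B (C j) (C j)| ≤ 2 := fun j => by rcases hCsq j with h | h <;> simp [h]
    obtain ⟨u, hu, huu, hperp⟩ :=
      B.exists_isotropic_orthogonal_of_tendsto_norm_atTop hconv hC hCsq_le hCper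
    exact hu (horth_nonneg u hperp huu.ge)
  · obtain ⟨R, hR⟩ : ∃ R, ∃ᶠ j in atTop, ‖C j‖ < R := by
      simpa only [tendsto_atTop, not_forall, not_eventually, not_le] using hC
    have hCΛ : ∀ j, C j ∈ span ℤ (Set.range b) := by subst hΛ; exact hCmem
    obtain ⟨v, hv⟩ := exists_frequently_eq_of_frequently_norm_le b hCΛ (hR.mono fun _ => le_of_lt)
    have hperp := B.apply_eq_zero_of_frequently_eq hconv hCper hv
    obtain ⟨j, rfl⟩ := hv.exists
    rcases hCsq j with h | h
    · exact hCne j (horth_nonneg _ hperp h.ge)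
    · refine hnodelta ⟨C j, hCmem j, h, fun x hx => ?_⟩
      exact (span_le (p := LinearMap.ker (B (C j)))).2 (Set.range_subset_iff.2 hperp) hx

/-- The final contradiction of Step 3: given a signature-(3, n) decomposition, a full lattice
`Λ`, a `B`-orthonormal triple `η_∞` whose span is orthogonal to no `(-2)`-class of `Λ`,
triples `η_j → η_∞`, and nonzero lattice classes `C_j` of square `0` or `-2` whose pairings
with `η_j` tend to `0`, one obtains a contradiction. -/
theorem stmt4 (V : Type*) [NormedAddCommGroup V] [NormedSpace ℝ V] [FiniteDimensional ℝ V]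
    (B : V →ₗ[ℝ] V →ₗ[ℝ] ℝ) (hsymm : ∀ x y, B x y = B y x)
    (Pp Pm : Submodule ℝ V) (hcompl : IsCompl Pp Pm)
    (horth : ∀ x ∈ Pp, ∀ y ∈ Pm, B x y = 0)
    (hdimPp : Module.finrank ℝ Pp = 3)
    (hpos : ∀ x ∈ Pp, x ≠ 0 → 0 < B x x)
    (hneg : ∀ y ∈ Pm, y ≠ 0 → B y y < 0)
    (b : Module.Basis (Fin (Module.finrank ℝ V)) ℝ V)
    (Λ : Set V) (hΛ : Λ = (Submodule.span ℤ (Set.range b) : Set V))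
    (η' : Fin 3 → V)
    (horthη : ∀ α β, B (η' α) (η' β) = if α = β then (1 : ℝ) else 0)
    (hnodelta : ¬ ∃ δ ∈ Λ, B δ δ = -2 ∧
      ∀ x ∈ Submodule.span ℝ (Set.range η'), B δ x = 0)
    (η : ℕ → Fin 3 → V)
    (hconv : ∀ α, Tendsto (fun j => η j α) atTop (nhds (η' α)))
    (C : ℕ → V) (hCmem : ∀ j, C j ∈ Λ) (hCne : ∀ j, C j ≠ 0)
    (hCsq : ∀ j, B (C j) (C j) = 0 ∨ B (C j) (C j) = -2)
    (hCper : ∀ α, Tendsto (fun j => B (C j) (η j α)) atTop (nhds 0)) :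
    False :=
  stmt4_general V B hsymm Pp Pm hcompl hdimPp hneg b Λ hΛ η' horthη hnodelta η hconv C hCmem hCne
    hCsq hCper
end

section
/- Let V be a finite-dimensional real normed vector space and B : V → V → ℝ a symmetric bilinear form. Assume V admits a direct sum decomposition V = P⁺ ⊕ P⁻ into B-orthogonal subspaces with dim P⁺ = 3, B positive definite on P⁺ and negative definite on P⁻. Let Λ ⊆ V be the ℤ-span of some ℝ-basis of V. Then the set of continuous linear maps f : ℝ³ → V such that (i) the bilinear form (x,y) ↦ B(f(x), f(y)) on ℝ³ is positive definite, and (ii) for every δ ∈ Λ with B(δ,δ) = -2 there exists z ∈ ℝ³ with B(δ, f(z)) ≠ 0, is an open subset of the space of continuous linear maps ℝ³ → V with the operator norm. -/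
/-!
If `f : ℝ³ → V` pulls `B` back to a positive definite form, then, because `B` has exactly three
positive directions, `B` is negative definite on the `B`-orthogonal complement of the image of `f`.
By compactness of the unit sphere this negativity is uniform, `B u u < -c ‖u‖²`, and stays so for
all `g` near `f`. Hence a `(-2)`-class orthogonal to the image of such a `g` has `‖δ‖² < 2 / c`,
so only finitely many lattice classes can become orthogonal near `f`, and for each of them
non-orthogonality is an open condition.
-/

open Filter Topology Metric Module

section Signature

variable {V : Type*} [AddCommGroup V] [Module ℝ V] [FiniteDimensional ℝ V]
  (B : V →ₗ[ℝ] V →ₗ[ℝ] ℝ)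

theorem finrank_add_finrank_le_of_nonneg_of_negDef {X : Type*} [AddCommGroup X] [Module ℝ X]
    (φ : X →ₗ[ℝ] V) (hφ : Function.Injective φ) (hnonneg : ∀ x, 0 ≤ B (φ x) (φ x))
    {N : Submodule ℝ V} (hN : ∀ y ∈ N, y ≠ 0 → B y y < 0) :
    finrank ℝ X + finrank ℝ N ≤ finrank ℝ V := by
  rw [← LinearMap.finrank_range_of_inj hφ]
  refine Submodule.finrank_add_finrank_le_of_disjoint (Submodule.disjoint_def.2 ?_)
  rintro _ ⟨x, rfl⟩ hx
  by_contra h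
  exact (hN _ hx h).not_ge (hnonneg x)

theorem orthogonal_negDef_of_posDef (hsymm : ∀ x y, B x y = B y x)
    {P N : Submodule ℝ V} (hPN : IsCompl P N) (hN : ∀ y ∈ N, y ≠ 0 → B y y < 0)
    {E : Type*} [AddCommGroup E] [Module ℝ E] [FiniteDimensional ℝ E] (f : E →ₗ[ℝ] V)
    (hf : ∀ x, x ≠ 0 → 0 < B (f x) (f x)) (hdim : finrank ℝ P ≤ finrank ℝ E) :
    ∀ u, u ≠ 0 → (∀ z, B u (f z) = 0) → B u u < 0 := by
  intro u hu hperp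
  by_contra! huu
  have hfz : ∀ z, 0 ≤ B (f z) (f z) := fun z => by
    rcases eq_or_ne z 0 with rfl | hz
    · simp
    · exact (hf z hz).le
  -- `(z, t) ↦ f z + t • u` embeds a `B`-nonnegative space of dimension `finrank P + 1`.
  let φ : E × ℝ →ₗ[ℝ] V := f.coprod (LinearMap.toSpanSingleton ℝ V u)
  have hφ : ∀ p, B (φ p) (φ p) = B (f p.1) (f p.1) + p.2 ^ 2 * B u u := fun p => by
    simp [φ, hperp, hsymm (f _) u]
    ring
  have hinj : Function.Injective φ := by
    refine (injective_iff_map_eq_zero φ).2 fun ⟨z, t⟩ h => ?_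
    have hq := hφ (z, t)
    rw [h, map_zero] at hq
    dsimp only at hq
    have hz : z = 0 := by
      by_contra hz
      nlinarith [hf z hz, mul_nonneg (sq_nonneg t) huu]
    subst hz
    simpa [φ, hu] using h
  have := finrank_add_finrank_le_of_nonneg_of_negDef B φ hinj
    (fun p => by rw [hφ]; exact add_nonneg (hfz _) (by positivity)) hN
  have := Submodule.finrank_add_eq_of_isCompl hPN
  rw [finrank_prod, finrank_self] at *
  omega

end Signature

section Openness

variable {V : Type*} [NormedAddCommGroup V] [NormedSpace ℝ V] [FiniteDimensional ℝ V]
  (B : V →ₗ[ℝ] V →ₗ[ℝ] ℝ)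
  {E : Type*} [NormedAddCommGroup E] [NormedSpace ℝ E]

theorem Continuous.bilin_apply {X : Type*} [TopologicalSpace X] {a b : X → V}
    (ha : Continuous a) (hb : Continuous b) : Continuous fun x => B (a x) (b x) := by
  simpa using (B.toContinuousBilinearMap.continuous.comp ha).clm_apply hb

theorem eventually_forall_ne_zero_of_forall_sphere [FiniteDimensional ℝ E] {X : Type*}
    [TopologicalSpace X] {x₀ : X} {p : X → E → Prop}
    (hscale : ∀ x v (t : ℝ), t ≠ 0 → p x (t • v) → p x v)
    (hloc : ∀ v ∈ sphere (0 : E) 1, ∀ᶠ q : X × E in 𝓝 (x₀, v), p q.1 q.2) :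
    ∀ᶠ x in 𝓝 x₀, ∀ v, v ≠ 0 → p x v :=
  ((isCompact_sphere 0 1).eventually_forall_of_forall_eventually hloc).mono
    fun x hx v hv => hscale x v _ (inv_ne_zero (norm_ne_zero_iff.2 hv))
      (hx _ (mem_sphere_zero_iff_norm.2 (norm_smul_inv_norm hv)))

theorem eventually_pullback_posDef [FiniteDimensional ℝ E] {f : E →L[ℝ] V}
    (hf : ∀ x, x ≠ 0 → 0 < B (f x) (f x)) :
    ∀ᶠ g in 𝓝 f, ∀ x, x ≠ 0 → 0 < B (g x) (g x) := by
  refine eventually_forall_ne_zero_of_forall_sphere (fun g x t ht h => ?_) fun v hv => ?_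
  · simp only [map_smul, LinearMap.smul_apply, smul_eq_mul] at h
    nlinarith [sq_nonneg t, pow_pos (abs_pos.2 ht) 2]
  · have hev : Continuous fun q : (E →L[ℝ] V) × E => q.1 q.2 :=
      continuous_fst.clm_apply continuous_snd
    exact (isOpen_lt continuous_const (hev.bilin_apply B hev)).mem_nhds
      (hf v (ne_zero_of_mem_unit_sphere ⟨v, hv⟩))

theorem exists_eventually_orthogonal_negDef {f : E →L[ℝ] V}
    (hf : ∀ u, u ≠ 0 → (∀ z, B u (f z) = 0) → B u u < 0) :
    ∃ c > 0, ∀ᶠ g in 𝓝 f, ∀ u, u ≠ 0 → (∀ z, B u (g z) = 0) → B u u < -(c * ‖u‖ ^ 2) := by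
  have hBuu : Continuous fun u : V => B u u := continuous_id.bilin_apply B continuous_id
  set K := sphere (0 : V) 1 ∩ ⋂ z, {u | B u (f z) = 0}
  have hK : IsCompact K := (isCompact_sphere 0 1).inter_right <|
    isClosed_iInter fun z => isClosed_eq (continuous_id.bilin_apply B continuous_const)
      continuous_const
  obtain ⟨c, hc, hcK⟩ := hK.exists_forall_le' (f := fun u => -B u u) hBuu.neg.continuousOn
    fun u hu => neg_pos.2 <|
      hf u (ne_zero_of_mem_unit_sphere ⟨u, hu.1⟩) fun z => Set.mem_iInter.1 hu.2 z
  refine ⟨c / 2, half_pos hc, eventually_forall_ne_zero_of_forall_sphere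
    (fun g u t ht h hperp => ?_) fun v hv => ?_⟩
  · have := h fun z => by simp [hperp z]
    simp only [map_smul, LinearMap.smul_apply, smul_eq_mul, norm_smul, Real.norm_eq_abs, mul_pow,
      sq_abs] at this
    nlinarith [pow_pos (abs_pos.2 ht) 2]
  by_cases hvK : ∀ z, B v (f z) = 0
  · have hlt : B v v < -(c / 2 * ‖v‖ ^ 2) := by
      rw [mem_sphere_zero_iff_norm.1 hv]
      linarith [hcK v ⟨hv, Set.mem_iInter.2 hvK⟩]
    exact Eventually.mono ((isOpen_lt (hBuu.comp continuous_snd)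
      (((continuous_norm.comp continuous_snd).pow 2).const_mul _).neg).mem_nhds hlt)
      fun q hq _ => hq
  · obtain ⟨z, hz⟩ := not_forall.1 hvK
    have hev : Continuous fun q : (E →L[ℝ] V) × V => B q.2 (q.1 z) :=
      continuous_snd.bilin_apply B (continuous_fst.clm_apply continuous_const)
    exact Eventually.mono ((isOpen_ne_fun hev continuous_const).mem_nhds hz)
      fun q hq hperp => absurd (hperp z) hq

theorem isOpen_setOf_exists_apply_ne_zero (δ : V) :
    IsOpen {g : E →L[ℝ] V | ∃ z, B δ (g z) ≠ 0} := by
  simp only [Set.ofPred_exists]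
  exact isOpen_iUnion fun z => isOpen_ne_fun
    (continuous_const.bilin_apply B (continuous_id.clm_apply continuous_const)) continuous_const

end Openness

theorem stmt9_general (V : Type*) [NormedAddCommGroup V] [NormedSpace ℝ V] [FiniteDimensional ℝ V]
    (B : V →ₗ[ℝ] V →ₗ[ℝ] ℝ) (hsymm : ∀ x y, B x y = B y x)
    (Pp Pm : Submodule ℝ V) (hcompl : IsCompl Pp Pm)
    (hdimPp : Module.finrank ℝ Pp = 3)
    (hneg : ∀ y ∈ Pm, y ≠ 0 → B y y < 0)
    (b : Module.Basis (Fin (Module.finrank ℝ V)) ℝ V)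
    (Λ : Set V) (hΛ : Λ = (Submodule.span ℤ (Set.range b) : Set V)) :
    IsOpen {f : EuclideanSpace ℝ (Fin 3) →L[ℝ] V |
      (∀ x : EuclideanSpace ℝ (Fin 3), x ≠ 0 → 0 < B (f x) (f x)) ∧
      (∀ δ ∈ Λ, B δ δ = -2 → ∃ z : EuclideanSpace ℝ (Fin 3), B δ (f z) ≠ 0)} := by
  subst hΛ
  refine isOpen_iff_mem_nhds.2 fun f ⟨hf, hroots⟩ => ?_
  obtain ⟨c, hc, hnear⟩ := exists_eventually_orthogonal_negDef B
    (orthogonal_negDef_of_posDef B hsymm hcompl hneg f.toLinearMap hf (by simp [hdimPp]))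
  set S := closedBall (0 : V) √(2 / c) ∩ Submodule.span ℤ (Set.range b) ∩ {δ | B δ δ = -2}
  have hS : S.Finite := (ZSpan.setFinite_inter b isBounded_closedBall).inter_of_left _
  have hSnear : ∀ᶠ g in 𝓝 f, ∀ δ ∈ S, ∃ z, B δ (g z) ≠ 0 :=
    (eventually_all_finite hS).2 fun δ hδ =>
      (isOpen_setOf_exists_apply_ne_zero B δ).mem_nhds (hroots δ hδ.1.2 hδ.2)
  filter_upwards [eventually_pullback_posDef B hf, hnear, hSnear] with g hgpos hgneg hgroots
  refine ⟨hgpos, fun δ hδ hδ2 => ?_⟩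
  by_contra! hδperp
  have hδ0 : δ ≠ 0 := by rintro rfl; simp at hδ2
  have hδr : ‖δ‖ ≤ √(2 / c) :=
    Real.le_sqrt_of_sq_le ((le_div_iff₀ hc).2 (by nlinarith [hgneg δ hδ0 hδperp]))
  obtain ⟨z, hz⟩ := hgroots δ ⟨⟨mem_closedBall_zero_iff.2 hδr, hδ⟩, hδ2⟩
  exact hz (hδperp z)

/-- Openness of the frame-bundle version of `Gr^{+,∘}`: linear maps `f : ℝ³ → V` pulling `B`
back to a positive definite form and whose image is orthogonal to no `(-2)`-class of the
lattice `Λ` form an open set in the operator norm. -/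
theorem stmt9 (V : Type*) [NormedAddCommGroup V] [NormedSpace ℝ V] [FiniteDimensional ℝ V]
    (B : V →ₗ[ℝ] V →ₗ[ℝ] ℝ) (hsymm : ∀ x y, B x y = B y x)
    (Pp Pm : Submodule ℝ V) (hcompl : IsCompl Pp Pm)
    (horth : ∀ x ∈ Pp, ∀ y ∈ Pm, B x y = 0)
    (hdimPp : Module.finrank ℝ Pp = 3)
    (hpos : ∀ x ∈ Pp, x ≠ 0 → 0 < B x x)
    (hneg : ∀ y ∈ Pm, y ≠ 0 → B y y < 0)
    (b : Module.Basis (Fin (Module.finrank ℝ V)) ℝ V)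
    (Λ : Set V) (hΛ : Λ = (Submodule.span ℤ (Set.range b) : Set V)) :
    IsOpen {f : EuclideanSpace ℝ (Fin 3) →L[ℝ] V |
      (∀ x : EuclideanSpace ℝ (Fin 3), x ≠ 0 → 0 < B (f x) (f x)) ∧
      (∀ δ ∈ Λ, B δ δ = -2 → ∃ z : EuclideanSpace ℝ (Fin 3), B δ (f z) ≠ 0)} :=
  stmt9_general V B hsymm Pp Pm hcompl hdimPp hneg b Λ hΛ
end
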